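/- Suppose from configuration (v,c) there is a valid infinite computation that visits the state u infinitely often. Then there exists d ∈ ℕ with a valid finite computation from (v,c) to (u,d), together with a cycle ω starting at u such that ω^k(d) is a valid computation for every k ∈ ℕ, where moreover either weight(ω) = 0 or weight(ω) > 0. -/
import Mathlib


variable {V : Type*}

def IsPath (γ : List (V × V × ℤ)) : Prop :=
  γ.Chain' (fun e e' => e.2.1 = e'.1)

def pweight (γ : List (V × V × ℤ)) : ℤ :=
  (γ.map (fun e => e.2.2)).sum

def IsCycle (γ : List (V × V × ℤ)) : Prop :=
  IsPath γ ∧ γ ≠ [] ∧ γ.head?.map (·.1) = γ.getLast?.map (·.2.1)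

def iterC (ω : List (V × V × ℤ)) (k : ℕ) : List (V × V × ℤ) :=
  (List.replicate k ω).flatten

def cval (c : ℤ) : List (V × V × ℤ) → ℕ → ℤ
  | _, 0 => c
  | [], _ + 1 => c
  | e :: γ, i + 1 => cval (c + e.2.2) γ i

def ValidComp [Inhabited V] (τ : V → Finset ℤ) (γ : List (V × V × ℤ)) (c : ℤ) : Prop :=
  ∀ i < γ.length,
    0 ≤ cval c γ i ∧ 0 ≤ cval c γ (i + 1) ∧ cval c γ i ∉ τ ((γ.getD i default).1)

/-- A valid transition of the automaton with edge set E (no equality tests). -/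
def ValidStep (E : Set (V × V × ℤ)) (τ : V → Finset ℤ) (p q : V × ℤ) : Prop :=
  ∃ e ∈ E, e.1 = p.1 ∧ e.2.1 = q.1 ∧ q.2 = p.2 + e.2.2 ∧
    0 ≤ p.2 ∧ 0 ≤ q.2 ∧ p.2 ∉ τ p.1

/-- `CompAlong τ γ p q`: the computation along γ from p is valid and ends in q. -/
def CompAlong (τ : V → Finset ℤ) : List (V × V × ℤ) → V × ℤ → V × ℤ → Prop
  | [] => fun p q => p = q
  | e :: γ => fun p q =>
      e.1 = p.1 ∧ 0 ≤ p.2 ∧ p.2 ∉ τ p.1 ∧ 0 ≤ p.2 + e.2.2 ∧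
        CompAlong τ γ (e.2.1, p.2 + e.2.2) q


section Aux

variable (τ : V → Finset ℤ)

lemma compAlong_append {γ γ' : List (V × V × ℤ)} {p q r : V × ℤ}
    (h : CompAlong τ γ p q) (h' : CompAlong τ γ' q r) :
    CompAlong τ (γ ++ γ') p r := by
  induction γ generalizing p with
  | nil => simp only [CompAlong] at h; subst h; simpa using h'
  | cons e γ ih =>
    obtain ⟨h1, h2, h3, h4, h5⟩ := h
    exact ⟨h1, h2, h3, h4, ih h5⟩

/-- Starting counter `a` is "safe" for a list of edges. -/
def Safe : List (V × V × ℤ) → ℤ → Prop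
  | [], a => 0 ≤ a
  | e :: γ, a => 0 ≤ a ∧ (∀ z ∈ τ e.1, z < a) ∧ Safe γ (a + e.2.2)

lemma safe_nonneg : ∀ (γ : List (V × V × ℤ)) (a : ℤ), Safe τ γ a → 0 ≤ a
  | [], _, h => h
  | _ :: _, _, h => h.1

lemma exists_safe_bound (γ : List (V × V × ℤ)) :
    ∃ B : ℤ, ∀ a, B ≤ a → Safe τ γ a := by
  induction γ with
  | nil => exact ⟨0, fun a ha => ha⟩
  | cons e γ ih =>
    obtain ⟨B', hB'⟩ := ih
    obtain ⟨b, hb⟩ := (τ e.1).bddAbove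
    refine ⟨max (max 0 (b + 1)) (B' - e.2.2), fun a ha => ?_⟩
    have h1 : (0 : ℤ) ≤ a := le_trans (le_trans (le_max_left _ _) (le_max_left _ _)) ha
    have h2 : ∀ z ∈ τ e.1, z < a := fun z hz =>
      lt_of_lt_of_le (lt_of_le_of_lt (hb hz) (lt_add_one b))
        (le_trans (le_trans (le_max_right _ _) (le_max_left _ _)) ha)
    have h3 : B' ≤ a + e.2.2 := by
      have := le_trans (le_max_right _ _) ha; linarith
    exact ⟨h1, h2, hB' _ h3⟩

lemma compAlong_transport : ∀ (γ : List (V × V × ℤ)) (x y : V) (a₀ b₀ a : ℤ),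
    CompAlong τ γ (x, a₀) (y, b₀) → Safe τ γ a →
    CompAlong τ γ (x, a) (y, a + (b₀ - a₀)) := by
  intro γ
  induction γ with
  | nil =>
    intro x y a₀ b₀ a h hs
    simp only [CompAlong, Prod.mk.injEq] at h ⊢
    exact ⟨h.1, by rw [← h.2]; ring⟩
  | cons e γ ih =>
    intro x y a₀ b₀ a h hs
    obtain ⟨h1, _, _, _, h5⟩ := h
    obtain ⟨s1, s2, s3⟩ := hs
    refine ⟨h1, s1, fun hmem => absurd (s2 a (h1 ▸ hmem)) (lt_irrefl a), ?_, ?_⟩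
    · exact safe_nonneg τ γ _ s3
    · have := ih e.2.1 y (a₀ + e.2.2) b₀ (a + e.2.2) h5 s3
      have harith : a + e.2.2 + (b₀ - (a₀ + e.2.2)) = a + (b₀ - a₀) := by ring
      rwa [harith] at this

lemma safe_mono : ∀ (γ : List (V × V × ℤ)) (a t : ℤ), Safe τ γ a → 0 ≤ t →
    Safe τ γ (a + t) := by
  intro γ
  induction γ with
  | nil => intro a t h ht; exact add_nonneg h ht
  | cons e γ ih =>
    intro a t h ht
    obtain ⟨h1, h2, h3⟩ := h
    refine ⟨add_nonneg h1 ht, fun z hz => lt_of_lt_of_le (h2 z hz) (le_add_of_nonneg_right ht), ?_⟩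
    have := ih (a + e.2.2) t h3 ht
    have harith : a + e.2.2 + t = a + t + e.2.2 := by ring
    rwa [harith] at this

/-- Edges of a run segment. -/
def seg (ε : ℕ → V × V × ℤ) : ℕ → ℕ → List (V × V × ℤ)
  | _, 0 => []
  | m, k + 1 => ε m :: seg ε (m + 1) k

lemma iterC_succ (ω : List (V × V × ℤ)) (k : ℕ) :
    iterC ω (k + 1) = ω ++ iterC ω k := by
  simp [iterC, List.replicate_succ]

end Aux

/-- From a valid infinite computation starting at (v,c) that visits u infinitely
often one can extract d ≥ 0 with a valid finite computation from (v,c) to (u,d)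
and a cycle ω at u, of weight zero or positive, all of whose iterations ω^k(d)
are valid. -/
theorem extract_iterable_cycle [Inhabited V]
    (E : Set (V × V × ℤ)) (τ : V → Finset ℤ) (v u : V) (c : ℤ)
    (ρ : ℕ → V × ℤ) (h0 : ρ 0 = (v, c))
    (hstep : ∀ n : ℕ, ValidStep E τ (ρ n) (ρ (n + 1)))
    (hinf : {n : ℕ | (ρ n).1 = u}.Infinite) :
    ∃ d : ℤ, 0 ≤ d ∧ Relation.ReflTransGen (ValidStep E τ) (v, c) (u, d) ∧
      ∃ ω : List (V × V × ℤ), ω ≠ [] ∧ (∀ e ∈ ω, e ∈ E) ∧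
        (∀ k : ℕ, CompAlong τ (iterC ω k) (u, d) (u, d + (k : ℤ) * pweight ω)) ∧
        (pweight ω = 0 ∨ 0 < pweight ω) := by
  classical
  -- extract edges of the run
  choose ε hεE hε1 hε2 hε3 hε4 hε5 hε6 using hstep
  -- edges are in E along any segment
  have hsegE : ∀ k m, ∀ e ∈ seg ε m k, e ∈ E := by
    intro k
    induction k with
    | zero => intro m e he; simp [seg] at he
    | succ k ih =>
      intro m e he
      rcases (List.mem_cons).1 he with h | h
      · exact h ▸ hεE m
      · exact ih (m + 1) e h
  -- computations along segments
  have hcomp : ∀ k m, CompAlong τ (seg ε m k) (ρ m) (ρ (m + k)) := by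
    intro k
    induction k with
    | zero => intro m; simp [seg, CompAlong]
    | succ k ih =>
      intro m
      have hpair : ((ε m).2.1, (ρ m).2 + (ε m).2.2) = ρ (m + 1) :=
        Prod.ext (hε2 m) (hε3 m).symm
      refine ⟨hε1 m, hε4 m, hε6 m, ?_, ?_⟩
      · rw [← hε3 m]; exact hε5 m
      · have := ih (m + 1)
        rw [hpair]
        have : CompAlong τ (seg ε (m + 1) k) (ρ (m + 1)) (ρ (m + 1 + k)) := ih (m + 1)
        rwa [show m + 1 + k = m + (k + 1) by omega] at this
  -- weights of segments
  have hpw : ∀ k m, pweight (seg ε m k) = (ρ (m + k)).2 - (ρ m).2 := by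
    intro k
    induction k with
    | zero => intro m; simp [seg, pweight]
    | succ k ih =>
      intro m
      have : pweight (seg ε m (k + 1)) = (ε m).2.2 + pweight (seg ε (m + 1) k) := by
        simp [seg, pweight]
      rw [this, ih (m + 1), hε3 m, show m + 1 + k = m + (k + 1) by omega]
      ring
  -- reachability along the run
  have hreach : ∀ n, Relation.ReflTransGen (ValidStep E τ) (v, c) (ρ n) := by
    intro n
    induction n with
    | zero => rw [h0]
    | succ n ih =>
      exact ih.tail ⟨ε n, hεE n, hε1 n, hε2 n, hε3 n, hε4 n, hε5 n, hε6 n⟩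
  by_cases hrep : ∃ m n, m < n ∧ (ρ m).1 = u ∧ (ρ n).1 = u ∧ (ρ m).2 = (ρ n).2
  · -- zero-weight cycle
    obtain ⟨m, n, hmn, hmu, hnu, hval⟩ := hrep
    set d := (ρ m).2 with hd
    have hρm : ρ m = (u, d) := Prod.ext hmu rfl
    have hρn : ρ n = (u, d) := Prod.ext hnu hval.symm
    set ω := seg ε m (n - m) with hω
    have hmk : m + (n - m) = n := by omega
    have hcyc : CompAlong τ ω (u, d) (u, d) := by
      have := hcomp (n - m) m
      rwa [hmk, hρm, hρn] at this
    have hwzero : pweight ω = 0 := by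
      rw [hω, hpw, hmk, hρn]; simp [hd]
    have hne : ω ≠ [] := by
      rw [hω]
      obtain ⟨k, hk⟩ : ∃ k, n - m = k + 1 := ⟨n - m - 1, by omega⟩
      rw [hk]; simp [seg]
    refine ⟨d, hε4 m, by rw [← hρm]; exact hreach m, ω, hne, hsegE (n - m) m, ?_, Or.inl hwzero⟩
    intro k
    rw [hwzero]
    simp only [mul_zero, add_zero]
    induction k with
    | zero => simp [iterC, CompAlong]
    | succ k ih =>
      rw [iterC_succ]
      exact compAlong_append τ hcyc ih
  · -- positive-weight cycle
    push_neg at hrep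
    have hinj : ∀ m n, (ρ m).1 = u → (ρ n).1 = u → (ρ m).2 = (ρ n).2 → m = n := by
      intro m n hm hn hv
      rcases lt_trichotomy m n with h | h | h
      · exact absurd hv (hrep m n h hm hn)
      · exact h
      · exact absurd hv.symm (hrep n m h hn hm)
    -- a u-visit with minimal counter value
    obtain ⟨lb, ⟨m, hmu, hmv⟩, hlb⟩ :=
      Int.exists_least_of_bdd (P := fun z => ∃ n, (ρ n).1 = u ∧ (ρ n).2 = z)
        ⟨0, fun z ⟨n, _, hz⟩ => hz ▸ hε4 n⟩
        (hinf.nonempty.elim fun n hn => ⟨(ρ n).2, n, hn, rfl⟩)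
    obtain ⟨n, hn, hmn⟩ := hinf.exists_gt m
    have hnu : (ρ n).1 = u := hn
    have hlt : (ρ m).2 < (ρ n).2 := by
      have hle : lb ≤ (ρ n).2 := hlb _ ⟨n, hnu, rfl⟩
      have hne' : (ρ m).2 ≠ (ρ n).2 := fun h => absurd (hinj m n hmu hnu h) (by omega)
      omega
    set ω := seg ε m (n - m) with hω
    have hmk : m + (n - m) = n := by omega
    have hcyc : CompAlong τ ω (u, (ρ m).2) (u, (ρ n).2) := by
      have := hcomp (n - m) m
      rw [hmk] at this
      rwa [show ρ m = (u, (ρ m).2) from Prod.ext hmu rfl,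
        show ρ n = (u, (ρ n).2) from Prod.ext hnu rfl] at this
    have hwpos : 0 < pweight ω := by
      rw [hω, hpw, hmk]; omega
    have hne : ω ≠ [] := by
      rw [hω]
      obtain ⟨k, hk⟩ : ∃ k, n - m = k + 1 := ⟨n - m - 1, by omega⟩
      rw [hk]; simp [seg]
    obtain ⟨B, hB⟩ := exists_safe_bound τ ω
    -- counters at u are unbounded
    have hub : ∀ b : ℤ, ∃ m', (ρ m').1 = u ∧ b ≤ (ρ m').2 := by
      intro b
      by_contra hcon
      push_neg at hcon
      have himg : ((fun n => (ρ n).2) '' {n : ℕ | (ρ n).1 = u}).Finite := by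
        apply Set.Finite.subset (Set.finite_Ico 0 b)
        rintro z ⟨n', hn', rfl⟩
        exact ⟨hε4 n', hcon n' hn'⟩
      exact hinf (Set.Finite.of_finite_image himg
        (fun a ha b' hb' hab => hinj a b' ha hb' hab))
    obtain ⟨m', hm'u, hm'v⟩ := hub B
    set d := (ρ m').2 with hd
    have hρm' : ρ m' = (u, d) := Prod.ext hm'u rfl
    refine ⟨d, hε4 m', by rw [← hρm']; exact hreach m',
      ω, hne, hsegE (n - m) m, ?_, Or.inr hwpos⟩
    have key : ∀ k : ℕ, ∀ a : ℤ, B ≤ a →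
        CompAlong τ (iterC ω k) (u, a) (u, a + (k : ℤ) * pweight ω) := by
      intro k
      induction k with
      | zero => intro a ha; simp [iterC, CompAlong]
      | succ k ih =>
        intro a ha
        have h1 : CompAlong τ ω (u, a) (u, a + ((ρ n).2 - (ρ m).2)) :=
          compAlong_transport τ ω u u (ρ m).2 (ρ n).2 a hcyc (hB a ha)
        have hwe : pweight ω = (ρ n).2 - (ρ m).2 := by rw [hω, hpw, hmk]
        rw [← hwe] at h1
        have h2 := ih (a + pweight ω) (by linarith)
        rw [iterC_succ]
        have h3 := compAlong_append τ h1 h2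
        have harith : a + pweight ω + (k : ℤ) * pweight ω = a + ((k + 1 : ℕ) : ℤ) * pweight ω := by
          push_cast; ring
        rwa [harith] at h3
    exact fun k => key k d hm'v
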